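/- For a conformal Killing field V with conformal factor λ and any one-form A, the commutator Δ_{βδ}(V,A) := [∇_δ, L_V]A_β is symmetric in (β,δ) and equals A_β ∇_δ λ + (∇_β λ) A_δ − g_{βδ} A^γ ∇_γ λ. -/

import Mathlib

/-!
Statement 2: For a conformal Killing field V with conformal factor λ and any one-form A,
the commutator Δ_{βδ}(V,A) := [∇_δ, L_V]A_β is symmetric in (β,δ) and equals
  A_β ∇_δ λ + (∇_β λ) A_δ − g_{βδ} A^γ ∇_γ λ.
Formulated in local coordinates with the Levi-Civita connection of g.
-/

noncomputable section

abbrev Pt4 := Fin 4 → ℝ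

def pd (i : Fin 4) (f : Pt4 → ℝ) (x : Pt4) : ℝ := fderiv ℝ f x (Pi.single i 1)

def covOne (Γ : Fin 4 → Fin 4 → Fin 4 → Pt4 → ℝ) (A : Fin 4 → Pt4 → ℝ)
    (δ β : Fin 4) (x : Pt4) : ℝ :=
  pd δ (A β) x - ∑ γ, Γ γ δ β x * A γ x

def covT2 (Γ : Fin 4 → Fin 4 → Fin 4 → Pt4 → ℝ) (T : Fin 4 → Fin 4 → Pt4 → ℝ)
    (γ α β : Fin 4) (x : Pt4) : ℝ :=
  pd γ (fun y => T α β y) x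
    - ∑ l, Γ l γ α x * T l β x
    - ∑ l, Γ l γ β x * T α l x

def lieOne (V A : Fin 4 → Pt4 → ℝ) (β : Fin 4) (x : Pt4) : ℝ :=
  ∑ γ, V γ x * pd γ (A β) x + ∑ γ, A γ x * pd β (V γ) x

def lieT2 (V : Fin 4 → Pt4 → ℝ) (T : Fin 4 → Fin 4 → Pt4 → ℝ)
    (β δ : Fin 4) (x : Pt4) : ℝ :=
  ∑ γ, V γ x * pd γ (fun y => T β δ y) x
    + ∑ γ, T γ δ x * pd β (V γ) x
    + ∑ γ, T β γ x * pd δ (V γ) x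

def lower (g : Fin 4 → Fin 4 → Pt4 → ℝ) (V : Fin 4 → Pt4 → ℝ)
    (β : Fin 4) (y : Pt4) : ℝ :=
  ∑ γ, g β γ y * V γ y

/-- Δ_{βδ}(V,A) := [∇_δ, L_V]A_β = ∇_δ (L_V A)_β − (L_V ∇A)_{δβ}. -/
def Delta (Γ : Fin 4 → Fin 4 → Fin 4 → Pt4 → ℝ) (V A : Fin 4 → Pt4 → ℝ)
    (β δ : Fin 4) (x : Pt4) : ℝ :=
  covOne Γ (fun β' y => lieOne V A β' y) δ β x
    - lieT2 V (fun δ' β' => covOne Γ A δ' β') δ β x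


section Aux

variable {f g' : Pt4 → ℝ} {i j : Fin 4} {x : Pt4}

@[fun_prop]
theorem ContDiff.pdc (hf : ContDiff ℝ (⊤ : ℕ∞) f) (i : Fin 4) : ContDiff ℝ (⊤ : ℕ∞) (pd i f) := by
  have h1 : ContDiff ℝ (⊤ : ℕ∞) (fderiv ℝ f) := hf.fderiv_right (by simp)
  exact h1.clm_apply contDiff_const

@[fun_prop]
theorem contDiff_sum' {ι : Type*} (s : Finset ι) (F : ι → Pt4 → ℝ)
    (hF : ∀ k, ContDiff ℝ (⊤ : ℕ∞) (F k)) : ContDiff ℝ (⊤ : ℕ∞) (fun x => ∑ k ∈ s, F k x) :=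
  ContDiff.sum fun k _ => hF k

theorem pd_congr {g : Pt4 → ℝ} (h : ∀ y, f y = g y) : pd i f x = pd i g x := by
  have : f = g := funext h
  rw [this]

theorem pd_add {g : Pt4 → ℝ} (hf : ContDiff ℝ (⊤ : ℕ∞) f) (hg : ContDiff ℝ (⊤ : ℕ∞) g) :
    pd i (fun y => f y + g y) x = pd i f x + pd i g x := by
  unfold pd
  rw [fderiv_fun_add (hf.differentiable (by simp)).differentiableAt
    (hg.differentiable (by simp)).differentiableAt]
  simp

theorem pd_sub {g : Pt4 → ℝ} (hf : ContDiff ℝ (⊤ : ℕ∞) f) (hg : ContDiff ℝ (⊤ : ℕ∞) g) :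
    pd i (fun y => f y - g y) x = pd i f x - pd i g x := by
  unfold pd
  rw [fderiv_fun_sub (hf.differentiable (by simp)).differentiableAt
    (hg.differentiable (by simp)).differentiableAt]
  simp

theorem pd_mul {g : Pt4 → ℝ} (hf : ContDiff ℝ (⊤ : ℕ∞) f) (hg : ContDiff ℝ (⊤ : ℕ∞) g) :
    pd i (fun y => f y * g y) x = pd i f x * g x + f x * pd i g x := by
  unfold pd
  rw [fderiv_fun_mul (hf.differentiable (by simp)).differentiableAt
    (hg.differentiable (by simp)).differentiableAt]
  simp [mul_comm]
  ring

theorem pd_const_mul (c : ℝ) (hf : ContDiff ℝ (⊤ : ℕ∞) f) :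
    pd i (fun y => c * f y) x = c * pd i f x := by
  unfold pd
  rw [fderiv_const_mul (hf.differentiable (by simp)).differentiableAt]
  simp

theorem pd_sum {s : Finset (Fin 4)} {F : Fin 4 → Pt4 → ℝ} (hF : ∀ k, ContDiff ℝ (⊤ : ℕ∞) (F k)) :
    pd i (fun y => ∑ k ∈ s, F k y) x = ∑ k ∈ s, pd i (F k) x := by
  unfold pd
  rw [fderiv_fun_sum (fun k _ => ((hF k).differentiable (by simp)).differentiableAt)]
  simp

theorem pd_comm (hf : ContDiff ℝ (⊤ : ℕ∞) f) :
    pd i (fun y => pd j f y) x = pd j (fun y => pd i f y) x := by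
  have hdf : ContDiff ℝ (⊤ : ℕ∞) (fderiv ℝ f) := hf.fderiv_right (by simp)
  have key : ∀ k l : Fin 4, pd k (fun y => pd l f y) x
      = fderiv ℝ (fderiv ℝ f) x (Pi.single k 1) (Pi.single l 1) := by
    intro k l
    show fderiv ℝ (fun y => fderiv ℝ f y (Pi.single l 1)) x (Pi.single k 1) = _
    rw [fderiv_clm_apply (hdf.differentiable (by simp)).differentiableAt
      (differentiableAt_const _)]
    simp
  have hsymm : IsSymmSndFDerivAt ℝ f x :=
    (hf.contDiffAt).isSymmSndFDerivAt (by rw [minSmoothness_of_isRCLikeNormedField]; exact WithTop.coe_le_coe.mpr le_top)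
  rw [key i j, key j i]
  exact hsymm _ _

end Aux

/-- The Lie derivative of the Christoffel symbols, `(L_V Γ)^σ_{δβ}`. -/
def LVG (Γ : Fin 4 → Fin 4 → Fin 4 → Pt4 → ℝ) (V : Fin 4 → Pt4 → ℝ)
    (σ δ β : Fin 4) (x : Pt4) : ℝ :=
  pd δ (pd β (V σ)) x
    + ∑ γ, (V γ x * pd γ (Γ σ δ β) x - Γ γ δ β x * pd γ (V σ) x
        + Γ σ γ β x * pd δ (V γ) x + Γ σ δ γ x * pd β (V γ) x)

theorem delta_eq (Γ : Fin 4 → Fin 4 → Fin 4 → Pt4 → ℝ) (V A : Fin 4 → Pt4 → ℝ)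
    (hΓ : ∀ σ δ β, ContDiff ℝ (⊤ : ℕ∞) (Γ σ δ β)) (hV : ∀ μ, ContDiff ℝ (⊤ : ℕ∞) (V μ))
    (hA : ∀ μ, ContDiff ℝ (⊤ : ℕ∞) (A μ)) (β δ : Fin 4) (x : Pt4) :
    Delta Γ V A β δ x = ∑ σ, A σ x * LVG Γ V σ δ β x := by
  have cA : ∀ (γ c : Fin 4), pd γ (pd δ (A c)) x = pd δ (pd γ (A c)) x :=
    fun γ c => pd_comm (hA c)
  simp only [Delta, covOne, lieOne, lieT2, LVG]
  simp (disch := fun_prop) only [pd_add, pd_sub, pd_mul, pd_sum]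
  simp only [cA]
  simp only [Fin.sum_univ_four]
  ring

set_option maxHeartbeats 4000000 in
theorem keydag (g : Fin 4 → Fin 4 → Pt4 → ℝ) (Γ : Fin 4 → Fin 4 → Fin 4 → Pt4 → ℝ)
    (V : Fin 4 → Pt4 → ℝ)
    (hg : ∀ μ ν, ContDiff ℝ (⊤ : ℕ∞) (g μ ν))
    (hgsym : ∀ μ ν x, g μ ν x = g ν μ x)
    (hΓ : ∀ σ δ β, ContDiff ℝ (⊤ : ℕ∞) (Γ σ δ β))
    (hΓsym : ∀ σ δ β x, Γ σ δ β x = Γ σ β δ x)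
    (hcompat : ∀ γ α β x, covT2 Γ g γ α β x = 0)
    (hV : ∀ μ, ContDiff ℝ (⊤ : ℕ∞) (V μ))
    (β δ μ : Fin 4) (x : Pt4) :
    2 * ∑ σ, g μ σ x * LVG Γ V σ δ β x
      = covT2 Γ (fun a b y => covOne Γ (lower g V) a b y + covOne Γ (lower g V) b a y) δ β μ x
      + covT2 Γ (fun a b y => covOne Γ (lower g V) a b y + covOne Γ (lower g V) b a y) β δ μ x
      - covT2 Γ (fun a b y => covOne Γ (lower g V) a b y + covOne Γ (lower g V) b a y) μ δ β x := by
  have hpdg : ∀ (e a b : Fin 4) (y : Pt4), pd e (g a b) y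
      = ∑ l, (Γ l e a y * g l b y + Γ l e b y * g a l y) := by
    intro e a b y
    have h := hcompat e a b y
    simp only [covT2] at h
    rw [Finset.sum_add_distrib]
    linarith
  have hpdW : ∀ (e c : Fin 4) (y : Pt4), pd e (lower g V c) y
      = ∑ l, (pd e (g c l) y * V l y + g c l y * pd e (V l) y) := by
    intro e c y
    have h0 : lower g V c = fun y' => ∑ l, g c l y' * V l y' := rfl
    rw [h0, pd_sum (fun k => (hg c k).mul (hV k))]
    exact Finset.sum_congr rfl fun k _ => pd_mul (hg c k) (hV k)
  have cV1 : ∀ c, pd β (pd δ (V c)) x = pd δ (pd β (V c)) x := fun c => pd_comm (hV c)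
  have cV2 : ∀ c, pd μ (pd δ (V c)) x = pd δ (pd μ (V c)) x := fun c => pd_comm (hV c)
  have cV3 : ∀ c, pd μ (pd β (V c)) x = pd β (pd μ (V c)) x := fun c => pd_comm (hV c)
  have cg_b_d : g β δ x = g δ β x := hgsym β δ x
  have cG_b_d : ∀ l, Γ l β δ x = Γ l δ β x := fun l => hΓsym l β δ x
  have cD_b_d : ∀ e l, pd e (Γ l β δ) x = pd e (Γ l δ β) x := fun e l => pd_congr (fun y => hΓsym l β δ y)
  have cg_m_d : g μ δ x = g δ μ x := hgsym μ δ x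
  have cG_m_d : ∀ l, Γ l μ δ x = Γ l δ μ x := fun l => hΓsym l μ δ x
  have cD_m_d : ∀ e l, pd e (Γ l μ δ) x = pd e (Γ l δ μ) x := fun e l => pd_congr (fun y => hΓsym l μ δ y)
  have cg_l0_d : g 0 δ x = g δ 0 x := hgsym 0 δ x
  have cG_l0_d : ∀ l, Γ l 0 δ x = Γ l δ 0 x := fun l => hΓsym l 0 δ x
  have cD_l0_d : ∀ e l, pd e (Γ l 0 δ) x = pd e (Γ l δ 0) x := fun e l => pd_congr (fun y => hΓsym l 0 δ y)
  have cg_l1_d : g 1 δ x = g δ 1 x := hgsym 1 δ x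
  have cG_l1_d : ∀ l, Γ l 1 δ x = Γ l δ 1 x := fun l => hΓsym l 1 δ x
  have cD_l1_d : ∀ e l, pd e (Γ l 1 δ) x = pd e (Γ l δ 1) x := fun e l => pd_congr (fun y => hΓsym l 1 δ y)
  have cg_l2_d : g 2 δ x = g δ 2 x := hgsym 2 δ x
  have cG_l2_d : ∀ l, Γ l 2 δ x = Γ l δ 2 x := fun l => hΓsym l 2 δ x
  have cD_l2_d : ∀ e l, pd e (Γ l 2 δ) x = pd e (Γ l δ 2) x := fun e l => pd_congr (fun y => hΓsym l 2 δ y)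
  have cg_l3_d : g 3 δ x = g δ 3 x := hgsym 3 δ x
  have cG_l3_d : ∀ l, Γ l 3 δ x = Γ l δ 3 x := fun l => hΓsym l 3 δ x
  have cD_l3_d : ∀ e l, pd e (Γ l 3 δ) x = pd e (Γ l δ 3) x := fun e l => pd_congr (fun y => hΓsym l 3 δ y)
  have cg_m_b : g μ β x = g β μ x := hgsym μ β x
  have cG_m_b : ∀ l, Γ l μ β x = Γ l β μ x := fun l => hΓsym l μ β x
  have cD_m_b : ∀ e l, pd e (Γ l μ β) x = pd e (Γ l β μ) x := fun e l => pd_congr (fun y => hΓsym l μ β y)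
  have cg_l0_b : g 0 β x = g β 0 x := hgsym 0 β x
  have cG_l0_b : ∀ l, Γ l 0 β x = Γ l β 0 x := fun l => hΓsym l 0 β x
  have cD_l0_b : ∀ e l, pd e (Γ l 0 β) x = pd e (Γ l β 0) x := fun e l => pd_congr (fun y => hΓsym l 0 β y)
  have cg_l1_b : g 1 β x = g β 1 x := hgsym 1 β x
  have cG_l1_b : ∀ l, Γ l 1 β x = Γ l β 1 x := fun l => hΓsym l 1 β x
  have cD_l1_b : ∀ e l, pd e (Γ l 1 β) x = pd e (Γ l β 1) x := fun e l => pd_congr (fun y => hΓsym l 1 β y)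
  have cg_l2_b : g 2 β x = g β 2 x := hgsym 2 β x
  have cG_l2_b : ∀ l, Γ l 2 β x = Γ l β 2 x := fun l => hΓsym l 2 β x
  have cD_l2_b : ∀ e l, pd e (Γ l 2 β) x = pd e (Γ l β 2) x := fun e l => pd_congr (fun y => hΓsym l 2 β y)
  have cg_l3_b : g 3 β x = g β 3 x := hgsym 3 β x
  have cG_l3_b : ∀ l, Γ l 3 β x = Γ l β 3 x := fun l => hΓsym l 3 β x
  have cD_l3_b : ∀ e l, pd e (Γ l 3 β) x = pd e (Γ l β 3) x := fun e l => pd_congr (fun y => hΓsym l 3 β y)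
  have cg_l0_m : g 0 μ x = g μ 0 x := hgsym 0 μ x
  have cG_l0_m : ∀ l, Γ l 0 μ x = Γ l μ 0 x := fun l => hΓsym l 0 μ x
  have cD_l0_m : ∀ e l, pd e (Γ l 0 μ) x = pd e (Γ l μ 0) x := fun e l => pd_congr (fun y => hΓsym l 0 μ y)
  have cg_l1_m : g 1 μ x = g μ 1 x := hgsym 1 μ x
  have cG_l1_m : ∀ l, Γ l 1 μ x = Γ l μ 1 x := fun l => hΓsym l 1 μ x
  have cD_l1_m : ∀ e l, pd e (Γ l 1 μ) x = pd e (Γ l μ 1) x := fun e l => pd_congr (fun y => hΓsym l 1 μ y)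
  have cg_l2_m : g 2 μ x = g μ 2 x := hgsym 2 μ x
  have cG_l2_m : ∀ l, Γ l 2 μ x = Γ l μ 2 x := fun l => hΓsym l 2 μ x
  have cD_l2_m : ∀ e l, pd e (Γ l 2 μ) x = pd e (Γ l μ 2) x := fun e l => pd_congr (fun y => hΓsym l 2 μ y)
  have cg_l3_m : g 3 μ x = g μ 3 x := hgsym 3 μ x
  have cG_l3_m : ∀ l, Γ l 3 μ x = Γ l μ 3 x := fun l => hΓsym l 3 μ x
  have cD_l3_m : ∀ e l, pd e (Γ l 3 μ) x = pd e (Γ l μ 3) x := fun e l => pd_congr (fun y => hΓsym l 3 μ y)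
  have cg_l1_l0 : g 1 0 x = g 0 1 x := hgsym 1 0 x
  have cG_l1_l0 : ∀ l, Γ l 1 0 x = Γ l 0 1 x := fun l => hΓsym l 1 0 x
  have cD_l1_l0 : ∀ e l, pd e (Γ l 1 0) x = pd e (Γ l 0 1) x := fun e l => pd_congr (fun y => hΓsym l 1 0 y)
  have cg_l2_l0 : g 2 0 x = g 0 2 x := hgsym 2 0 x
  have cG_l2_l0 : ∀ l, Γ l 2 0 x = Γ l 0 2 x := fun l => hΓsym l 2 0 x
  have cD_l2_l0 : ∀ e l, pd e (Γ l 2 0) x = pd e (Γ l 0 2) x := fun e l => pd_congr (fun y => hΓsym l 2 0 y)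
  have cg_l3_l0 : g 3 0 x = g 0 3 x := hgsym 3 0 x
  have cG_l3_l0 : ∀ l, Γ l 3 0 x = Γ l 0 3 x := fun l => hΓsym l 3 0 x
  have cD_l3_l0 : ∀ e l, pd e (Γ l 3 0) x = pd e (Γ l 0 3) x := fun e l => pd_congr (fun y => hΓsym l 3 0 y)
  have cg_l2_l1 : g 2 1 x = g 1 2 x := hgsym 2 1 x
  have cG_l2_l1 : ∀ l, Γ l 2 1 x = Γ l 1 2 x := fun l => hΓsym l 2 1 x
  have cD_l2_l1 : ∀ e l, pd e (Γ l 2 1) x = pd e (Γ l 1 2) x := fun e l => pd_congr (fun y => hΓsym l 2 1 y)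
  have cg_l3_l1 : g 3 1 x = g 1 3 x := hgsym 3 1 x
  have cG_l3_l1 : ∀ l, Γ l 3 1 x = Γ l 1 3 x := fun l => hΓsym l 3 1 x
  have cD_l3_l1 : ∀ e l, pd e (Γ l 3 1) x = pd e (Γ l 1 3) x := fun e l => pd_congr (fun y => hΓsym l 3 1 y)
  have cg_l3_l2 : g 3 2 x = g 2 3 x := hgsym 3 2 x
  have cG_l3_l2 : ∀ l, Γ l 3 2 x = Γ l 2 3 x := fun l => hΓsym l 3 2 x
  have cD_l3_l2 : ∀ e l, pd e (Γ l 3 2) x = pd e (Γ l 2 3) x := fun e l => pd_congr (fun y => hΓsym l 3 2 y)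
  have hgfun : ∀ a c d : Fin 4, pd a (g c d)
      = fun y => ∑ l, (Γ l a c y * g l d y + Γ l a d y * g c l y) :=
    fun a c d => funext fun y => hpdg a c d y
  have hR : ∀ e a c d : Fin 4, pd e (pd a (g c d)) x = pd a (pd e (g c d)) x :=
    fun e a c d => pd_comm (hg c d)
  have R10 := hR 0 δ β μ
  have R11 := hR 1 δ β μ
  have R12 := hR 2 δ β μ
  have R13 := hR 3 δ β μ
  have R20 := hR 0 β δ μ
  have R21 := hR 1 β δ μ
  have R22 := hR 2 β δ μ
  have R23 := hR 3 β δ μ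
  have R30 := hR 0 μ δ β
  have R31 := hR 1 μ δ β
  have R32 := hR 2 μ δ β
  have R33 := hR 3 μ δ β
  simp only [hgfun] at R10 R11 R12 R13 R20 R21 R22 R23 R30 R31 R32 R33
  simp (disch := fun_prop) only [pd_add, pd_sum, pd_mul] at R10 R11 R12 R13 R20 R21 R22 R23 R30 R31 R32 R33
  simp only [hpdg] at R10 R11 R12 R13 R20 R21 R22 R23 R30 R31 R32 R33
  simp only [Fin.sum_univ_four] at R10 R11 R12 R13 R20 R21 R22 R23 R30 R31 R32 R33
  simp only [cg_b_d, cG_b_d, cD_b_d, cg_m_d, cG_m_d, cD_m_d, cg_l0_d, cG_l0_d, cD_l0_d, cg_l1_d, cG_l1_d, cD_l1_d, cg_l2_d, cG_l2_d, cD_l2_d, cg_l3_d, cG_l3_d, cD_l3_d, cg_m_b, cG_m_b, cD_m_b, cg_l0_b, cG_l0_b, cD_l0_b, cg_l1_b, cG_l1_b, cD_l1_b, cg_l2_b, cG_l2_b, cD_l2_b, cg_l3_b, cG_l3_b, cD_l3_b, cg_l0_m, cG_l0_m, cD_l0_m, cg_l1_m, cG_l1_m, cD_l1_m, cg_l2_m,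 cG_l2_m, cD_l2_m, cg_l3_m, cG_l3_m, cD_l3_m, cg_l1_l0, cG_l1_l0, cD_l1_l0, cg_l2_l0, cG_l2_l0, cD_l2_l0, cg_l3_l0, cG_l3_l0, cD_l3_l0, cg_l2_l1, cG_l2_l1, cD_l2_l1, cg_l3_l1, cG_l3_l1, cD_l3_l1, cg_l3_l2, cG_l3_l2, cD_l3_l2] at R10 R11 R12 R13 R20 R21 R22 R23 R30 R31 R32 R33
  simp only [covT2, covOne, LVG]
  simp only [hpdW, hpdg, lower]
  simp (disch := fun_prop) only [pd_add, pd_sub, pd_sum, pd_mul]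
  simp only [hpdg]
  simp only [cV1, cV2, cV3]
  simp only [Fin.sum_univ_four]
  simp only [cg_b_d, cG_b_d, cD_b_d, cg_m_d, cG_m_d, cD_m_d, cg_l0_d, cG_l0_d, cD_l0_d, cg_l1_d, cG_l1_d, cD_l1_d, cg_l2_d, cG_l2_d, cD_l2_d, cg_l3_d, cG_l3_d, cD_l3_d, cg_m_b, cG_m_b, cD_m_b, cg_l0_b, cG_l0_b, cD_l0_b, cg_l1_b, cG_l1_b, cD_l1_b, cg_l2_b, cG_l2_b, cD_l2_b, cg_l3_b, cG_l3_b, cD_l3_b, cg_l0_m, cG_l0_m, cD_l0_m, cg_l1_m, cG_l1_m, cD_l1_m, cg_l2_m, cG_l2_m, cD_l2_m, cg_l3_m, cG_l3_m, cD_l3_m, cg_l1_l0, cG_l1_l0, cD_l1_l0, cg_l2_l0, cG_l2_l0, cD_l2_l0, cg_l3_l0, cG_l3_l0, cD_l3_l0, cg_l2_l1, cG_l2_l1, cD_l2_l1, cg_l3_l1, cG_l3_l1, cD_l3_l1, cg_l3_l2, cG_l3_l2, cD_l3_l2]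
  linear_combination V 0 x * R10 + V 1 x * R11 + V 2 x * R12 + V 3 x * R13 + V 0 x * R20 + V 1 x * R21 + V 2 x * R22 + V 3 x * R23 - V 0 x * R30 - V 1 x * R31 - V 2 x * R32 - V 3 x * R33

theorem lvg_symm (Γ : Fin 4 → Fin 4 → Fin 4 → Pt4 → ℝ) (V : Fin 4 → Pt4 → ℝ)
    (hΓsym : ∀ σ δ β x, Γ σ δ β x = Γ σ β δ x) (hV : ∀ μ, ContDiff ℝ (⊤ : ℕ∞) (V μ))
    (σ β δ : Fin 4) (x : Pt4) :
    LVG Γ V σ δ β x = LVG Γ V σ β δ x := by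
  unfold LVG
  rw [pd_comm (hV σ)]
  congr 1
  apply Finset.sum_congr rfl
  intro γ _
  rw [show pd γ (Γ σ δ β) x = pd γ (Γ σ β δ) x from pd_congr (fun y => hΓsym σ δ β y),
    hΓsym γ δ β x, hΓsym σ γ β x, hΓsym σ δ γ x]
  ring

set_option maxHeartbeats 1000000 in
theorem keyB (g : Fin 4 → Fin 4 → Pt4 → ℝ) (Γ : Fin 4 → Fin 4 → Fin 4 → Pt4 → ℝ)
    (V : Fin 4 → Pt4 → ℝ) (lam : Pt4 → ℝ)
    (hg : ∀ μ ν, ContDiff ℝ (⊤ : ℕ∞) (g μ ν))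
    (hgsym : ∀ μ ν x, g μ ν x = g ν μ x)
    (hΓ : ∀ σ δ β, ContDiff ℝ (⊤ : ℕ∞) (Γ σ δ β))
    (hΓsym : ∀ σ δ β x, Γ σ δ β x = Γ σ β δ x)
    (hcompat : ∀ γ α β x, covT2 Γ g γ α β x = 0)
    (hV : ∀ μ, ContDiff ℝ (⊤ : ℕ∞) (V μ))
    (hlam : ContDiff ℝ (⊤ : ℕ∞) lam)
    (hCKV : ∀ α β x,
      covOne Γ (lower g V) α β x + covOne Γ (lower g V) β α x = 2 * lam x * g α β x)
    (β δ μ : Fin 4) (x : Pt4) :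
    ∑ σ, g μ σ x * LVG Γ V σ δ β x
      = g β μ x * pd δ lam x + g δ μ x * pd β lam x - g δ β x * pd μ lam x := by
  have hpdg : ∀ (e a b : Fin 4) (y : Pt4), pd e (g a b) y
      = ∑ l, (Γ l e a y * g l b y + Γ l e b y * g a l y) := by
    intro e a b y
    have h := hcompat e a b y
    simp only [covT2] at h
    rw [Finset.sum_add_distrib]
    linarith
  have hTS : ∀ a b c : Fin 4,
      covT2 Γ (fun a b y => covOne Γ (lower g V) a b y + covOne Γ (lower g V) b a y) a b c x
        = 2 * pd a lam x * g b c x := by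
    intro a b c
    simp only [covT2]
    rw [show (fun y => covOne Γ (lower g V) b c y + covOne Γ (lower g V) c b y)
        = fun y => 2 * lam y * g b c y from funext fun y => hCKV b c y]
    simp only [hCKV]
    rw [pd_mul (f := fun y => 2 * lam y) (g := g b c) (by fun_prop) (hg b c),
      pd_const_mul 2 hlam, hpdg]
    simp only [Fin.sum_univ_four]
    ring
  have hd := keydag g Γ V hg hgsym hΓ hΓsym hcompat hV β δ μ x
  rw [hTS δ β μ, hTS β δ μ, hTS μ δ β] at hd
  linear_combination hd / 2

theorem conformal_killing_Delta_formula
    (g gi : Fin 4 → Fin 4 → Pt4 → ℝ)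
    (Γ : Fin 4 → Fin 4 → Fin 4 → Pt4 → ℝ)
    (V A : Fin 4 → Pt4 → ℝ) (lam : Pt4 → ℝ)
    (hg : ∀ μ ν, ContDiff ℝ (⊤ : ℕ∞) (g μ ν))
    (hgsym : ∀ μ ν x, g μ ν x = g ν μ x)
    (hgi : ∀ μ ν, ContDiff ℝ (⊤ : ℕ∞) (gi μ ν))
    -- gi is the inverse metric g^{μν}
    (hinv : ∀ μ ν x, (∑ σ, gi μ σ x * g σ ν x) = if μ = ν then (1:ℝ) else 0)
    (hΓ : ∀ σ δ β, ContDiff ℝ (⊤ : ℕ∞) (Γ σ δ β))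
    (hΓsym : ∀ σ δ β x, Γ σ δ β x = Γ σ β δ x)
    (hcompat : ∀ γ α β x, covT2 Γ g γ α β x = 0)
    (hV : ∀ μ, ContDiff ℝ (⊤ : ℕ∞) (V μ))
    (hA : ∀ μ, ContDiff ℝ (⊤ : ℕ∞) (A μ))
    (hlam : ContDiff ℝ (⊤ : ℕ∞) lam)
    -- V is a conformal Killing field: ∇_{(α}V_{β)} = λ g_{αβ}
    (hCKV : ∀ α β x,
      covOne Γ (lower g V) α β x + covOne Γ (lower g V) β α x = 2 * lam x * g α β x)
    (β δ : Fin 4) (x : Pt4) :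
    Delta Γ V A β δ x = Delta Γ V A δ β x ∧
    Delta Γ V A β δ x
      = A β x * pd δ lam x + pd β lam x * A δ x
        - g β δ x * ∑ γ, (∑ σ, gi γ σ x * A σ x) * pd γ lam x := by
  have gisym : ∀ a b : Fin 4, gi a b x = gi b a x := by
    have hod : ∀ (c : Fin 4) (F : Fin 4 → ℝ),
        ∑ ρ, (if c = ρ then (1:ℝ) else 0) * F ρ = F c := by
      intro c F; simp
    have hinv2 : ∀ b ρ : Fin 4, ∑ σ, g ρ σ x * gi b σ x = if b = ρ then (1:ℝ) else 0 := by
      intro b ρ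
      rw [← hinv b ρ x]
      exact Finset.sum_congr rfl fun σ _ => by rw [hgsym ρ σ x]; ring
    intro a b
    calc gi a b x = ∑ ρ, (if b = ρ then (1:ℝ) else 0) * gi a ρ x :=
          (hod b fun ρ => gi a ρ x).symm
      _ = ∑ ρ, (∑ σ, g ρ σ x * gi b σ x) * gi a ρ x :=
          Finset.sum_congr rfl fun ρ _ => by rw [hinv2 b ρ]
      _ = ∑ σ, (∑ ρ, gi a ρ x * g ρ σ x) * gi b σ x := by
          simp only [Finset.sum_mul]
          rw [Finset.sum_comm]
          exact Finset.sum_congr rfl fun σ _ => Finset.sum_congr rfl fun ρ _ => by ring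
      _ = ∑ σ, (if a = σ then (1:ℝ) else 0) * gi b σ x :=
          Finset.sum_congr rfl fun σ _ => by rw [hinv a σ x]
      _ = gi b a x := hod a fun σ => gi b σ x
  have claim1 : ∀ σ : Fin 4, ∑ ρ, (∑ m, gi ρ m x * A m x) * g ρ σ x = A σ x := by
    intro σ
    calc ∑ ρ, (∑ m, gi ρ m x * A m x) * g ρ σ x
        = ∑ ρ, ∑ m, (gi m ρ x * g ρ σ x) * A m x := by
          refine Finset.sum_congr rfl fun ρ _ => ?_
          rw [Finset.sum_mul]
          exact Finset.sum_congr rfl fun m _ => by rw [gisym ρ m]; ring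
      _ = ∑ m, ∑ ρ, (gi m ρ x * g ρ σ x) * A m x := Finset.sum_comm
      _ = ∑ m, (∑ ρ, gi m ρ x * g ρ σ x) * A m x :=
          Finset.sum_congr rfl fun m _ => by rw [Finset.sum_mul]
      _ = ∑ m, (if m = σ then (1:ℝ) else 0) * A m x :=
          Finset.sum_congr rfl fun m _ => by rw [hinv m σ x]
      _ = A σ x := by simp
  have hB : ∀ ρ : Fin 4, ∑ σ, g ρ σ x * LVG Γ V σ δ β x
      = g β ρ x * pd δ lam x + g δ ρ x * pd β lam x - g δ β x * pd ρ lam x :=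
    fun ρ => keyB g Γ V lam hg hgsym hΓ hΓsym hcompat hV hlam hCKV β δ ρ x
  constructor
  · rw [delta_eq Γ V A hΓ hV hA β δ x, delta_eq Γ V A hΓ hV hA δ β x]
    exact Finset.sum_congr rfl fun σ _ => by rw [lvg_symm Γ V hΓsym hV σ β δ x]
  · rw [delta_eq Γ V A hΓ hV hA β δ x]
    calc ∑ σ, A σ x * LVG Γ V σ δ β x
        = ∑ σ, (∑ ρ, (∑ m, gi ρ m x * A m x) * g ρ σ x) * LVG Γ V σ δ β x :=
          Finset.sum_congr rfl fun σ _ => by rw [claim1 σ]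
      _ = ∑ ρ, (∑ m, gi ρ m x * A m x) * (∑ σ, g ρ σ x * LVG Γ V σ δ β x) := by
          simp only [Finset.sum_mul, Finset.mul_sum]
          rw [Finset.sum_comm]
          exact Finset.sum_congr rfl fun σ _ => Finset.sum_congr rfl fun ρ _ =>
            Finset.sum_congr rfl fun m _ => by ring
      _ = ∑ ρ, (∑ m, gi ρ m x * A m x)
            * (g ρ β x * pd δ lam x + g ρ δ x * pd β lam x - g β δ x * pd ρ lam x) := by
          refine Finset.sum_congr rfl fun ρ _ => ?_
          rw [hB ρ, hgsym β ρ x, hgsym δ ρ x, hgsym δ β x]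
      _ = A β x * pd δ lam x + pd β lam x * A δ x
            - g β δ x * ∑ γ, (∑ σ, gi γ σ x * A σ x) * pd γ lam x := by
          rw [← claim1 β, ← claim1 δ]
          simp only [Fin.sum_univ_four]
          ring
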